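/- Replacing a shortcut {u,v} (lying on a shortest path with fewest hops P = (p_0 = u, p_1, …, p_i = v) with i > 2) by the shortcut {p_{i-2}, v} cannot destroy any (k,k+1)-ball: if some vertex z reaches its (k+1)-th closest vertex t within k hops in G ∪ {{u,v}} using the shortcut, then z reaches t within k hops in G ∪ {{p_{i-2}, v}}. -/
import Mathlib


open scoped ENNReal Classical

/-- A walk from `u` is recorded as the list `p` of vertices visited after `u`;
it ends at `v` if the last vertex of `u :: p` is `v`. -/
def WalkEnds {V : Type*} (u : V) (p : List V) (v : V) : Prop := p.getLastD u = v

/-- A weighted (di)graph on vertex set `V`: weight `⊤` means "no edge". -/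
structure WGraph (V : Type*) where
  w : V → V → ℝ≥0∞

namespace WGraph

variable {V : Type*} (G : WGraph V)

/-- Total weight of the walk `u :: p`. -/
noncomputable def walkWeight : V → List V → ℝ≥0∞
  | _, [] => 0
  | u, v :: p => G.w u v + walkWeight v p

/-- Weight distance. -/
noncomputable def dist (u v : V) : ℝ≥0∞ :=
  sInf {c | ∃ p : List V, WalkEnds u p v ∧ G.walkWeight u p = c}

/-- Hop distance: the minimum number of edges among minimum-weight walks;
`⊤` if `v` is unreachable from `u`. -/
noncomputable def hopdist (u v : V) : ℕ∞ :=
  if G.dist u v = ⊤ then ⊤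
  else sInf {n : ℕ∞ | ∃ p : List V, WalkEnds u p v ∧
    G.walkWeight u p = G.dist u v ∧ (p.length : ℕ∞) = n}

/-- The set of vertices reachable from `u`, other than `u` itself. -/
def Reach (u : V) : Set V := {v | v ≠ u ∧ G.dist u v ≠ ⊤}

/-- `S` is a `ρ`-closest neighbor set of `u`. -/
def IsClosest (ρ : ℕ) (u : V) (S : Set V) : Prop :=
  S ⊆ G.Reach u ∧ S.ncard = min (G.Reach u).ncard ρ ∧
    ∀ v ∈ S, ∀ x ∈ G.Reach u \ S, G.dist u v ≤ G.dist u x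

/-- `u` has a `(k,ρ)`-ball: some `ρ`-closest neighbor set lies within hop distance `k`. -/
def HasBall (k ρ : ℕ) (u : V) : Prop :=
  ∃ S : Set V, G.IsClosest ρ u S ∧ ∀ v ∈ S, G.hopdist u v ≤ (k : ℕ∞)

/-- `G` is a `(k,ρ)`-graph. -/
def IsKRhoGraph (k ρ : ℕ) : Prop := ∀ u, G.HasBall k ρ u

/-- `G` is undirected (symmetric weights). -/
def Symm : Prop := ∀ u v, G.w u v = G.w v u

/-- All edge weights are strictly positive (trivial for non-edges of weight `⊤`). -/
def Positive : Prop := ∀ u v, 0 < G.w u v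

/-- `(u,v)` is a (potential) shortcut: `v` is reachable from `u` and the hop distance
exceeds `1`. -/
def IsShortcut (u v : V) : Prop := G.dist u v ≠ ⊤ ∧ 1 < G.hopdist u v

/-- Add each pair in `S` as a directed edge of weight `G.dist`. -/
noncomputable def addD (S : Set (V × V)) : WGraph V :=
  ⟨fun a b => G.w a b ⊓ sInf {c | (a, b) ∈ S ∧ c = G.dist a b}⟩

/-- Add each pair in `S` as an undirected edge of weight `G.dist`. -/
noncomputable def addU (S : Set (V × V)) : WGraph V :=
  ⟨fun a b => G.w a b ⊓ sInf {c | ((a, b) ∈ S ∨ (b, a) ∈ S) ∧ c = G.dist a b}⟩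

/-- `S` is a (directed) `(k,ρ)`-shortcut set for `G`. -/
def IsShortcutSetD (k ρ : ℕ) (S : Set (V × V)) : Prop :=
  (∀ p ∈ S, G.IsShortcut p.1 p.2) ∧ (G.addD S).IsKRhoGraph k ρ ∧
    ∀ x y, (G.addD S).dist x y = G.dist x y

/-- `S` is an (undirected) `(k,ρ)`-shortcut set for `G`. -/
def IsShortcutSetU (k ρ : ℕ) (S : Set (V × V)) : Prop :=
  (∀ p ∈ S, G.IsShortcut p.1 p.2) ∧ (G.addU S).IsKRhoGraph k ρ ∧
    ∀ x y, (G.addU S).dist x y = G.dist x y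

end WGraph

section Aux

open WGraph

variable {V : Type*}

private lemma getLastD_append' (xs : List V) (y : V) (ys : List V) (d : V) :
    (xs ++ y :: ys).getLastD d = (y :: ys).getLastD d := by
  induction xs generalizing d with
  | nil => rfl
  | cons x xs ih =>
      rw [List.cons_append, List.getLastD_cons, ih, List.getLastD_cons, List.getLastD_cons]

private lemma getLastD_append (p q : List V) (d : V) :
    (p ++ q).getLastD d = q.getLastD (p.getLastD d) := by
  cases q with
  | nil => simp
  | cons y ys => rw [getLastD_append', List.getLastD_cons, List.getLastD_cons]

private lemma walkWeight_append (G : WGraph V) (p q : List V) (x : V) :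
    G.walkWeight x (p ++ q) = G.walkWeight x p + G.walkWeight (p.getLastD x) q := by
  induction p generalizing x with
  | nil => simp [WGraph.walkWeight]
  | cons y p ih =>
      rw [List.cons_append]
      show G.w x y + G.walkWeight y (p ++ q) = G.w x y + G.walkWeight y p + _
      rw [ih, List.getLastD_cons, add_assoc]

private lemma dist_le_walkWeight (G : WGraph V) {x y : V} {p : List V} (h : WalkEnds x p y) :
    G.dist x y ≤ G.walkWeight x p :=
  sInf_le ⟨p, h, rfl⟩

private lemma dist_le_w (G : WGraph V) (x y : V) : G.dist x y ≤ G.w x y := by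
  have : G.dist x y ≤ G.walkWeight x [y] := dist_le_walkWeight G rfl
  simpa [WGraph.walkWeight] using this

private lemma dist_triangle' (G : WGraph V) (x y z : V) :
    G.dist x z ≤ G.dist x y + G.dist y z := by
  refine ENNReal.le_of_forall_pos_le_add fun ε hε hlt => ?_
  have hε2 : (0 : ℝ≥0∞) < (ε : ℝ≥0∞) / 2 :=
    ENNReal.half_pos (by exact_mod_cast hε.ne')
  have hxy : G.dist x y < G.dist x y + (ε : ℝ≥0∞) / 2 :=
    ENNReal.lt_add_right (ne_top_of_le_ne_top hlt.ne le_self_add) hε2.ne'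
  have hyz : G.dist y z < G.dist y z + (ε : ℝ≥0∞) / 2 :=
    ENNReal.lt_add_right (ne_top_of_le_ne_top hlt.ne le_add_self) hε2.ne'
  obtain ⟨c1, ⟨p1, hp1, rfl⟩, hc1⟩ := sInf_lt_iff.mp hxy
  obtain ⟨c2, ⟨p2, hp2, rfl⟩, hc2⟩ := sInf_lt_iff.mp hyz
  have hends : WalkEnds x (p1 ++ p2) z := by
    unfold WalkEnds at *
    rw [getLastD_append, hp1, hp2]
  calc G.dist x z ≤ G.walkWeight x (p1 ++ p2) := dist_le_walkWeight G hends
    _ = G.walkWeight x p1 + G.walkWeight (p1.getLastD x) p2 := walkWeight_append G p1 p2 x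
    _ = G.walkWeight x p1 + G.walkWeight y p2 := by rw [hp1]
    _ ≤ (G.dist x y + (ε : ℝ≥0∞) / 2) + (G.dist y z + (ε : ℝ≥0∞) / 2) :=
        add_le_add hc1.le hc2.le
    _ = G.dist x y + G.dist y z + ((ε : ℝ≥0∞) / 2 + (ε : ℝ≥0∞) / 2) := by ring
    _ = G.dist x y + G.dist y z + ε := by rw [ENNReal.add_halves]

private lemma dist_le_addU_w (G : WGraph V) (S : Set (V × V)) (x y : V) :
    G.dist x y ≤ (G.addU S).w x y := by
  refine le_inf (dist_le_w G x y) (le_sInf fun c hc => ?_)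
  rw [hc.2]

private lemma addU_w_le (G : WGraph V) (S : Set (V × V)) (x y : V) :
    (G.addU S).w x y ≤ G.w x y := inf_le_left

private lemma addU_walkWeight_le (G : WGraph V) (S : Set (V × V)) :
    ∀ (p : List V) (x : V), (G.addU S).walkWeight x p ≤ G.walkWeight x p := by
  intro p
  induction p with
  | nil => intro x; exact le_refl _
  | cons y p ih =>
      intro x
      exact add_le_add (addU_w_le G S x y) (ih y)

private lemma dist_le_addU_walkWeight (G : WGraph V) (S : Set (V × V)) :
    ∀ (p : List V) (x : V), G.dist x (p.getLastD x) ≤ (G.addU S).walkWeight x p := by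
  intro p
  induction p with
  | nil =>
      intro x
      exact dist_le_walkWeight G (show WalkEnds x [] x from rfl)
  | cons y p ih =>
      intro x
      rw [List.getLastD_cons]
      calc G.dist x (p.getLastD y) ≤ G.dist x y + G.dist y (p.getLastD y) :=
            dist_triangle' G x y _
        _ ≤ (G.addU S).w x y + (G.addU S).walkWeight y p :=
            add_le_add (dist_le_addU_w G S x y) (ih y)
        _ = (G.addU S).walkWeight x (y :: p) := rfl

private lemma addU_dist_eq (G : WGraph V) (S : Set (V × V)) (x y : V) :
    (G.addU S).dist x y = G.dist x y := by
  refine le_antisymm ?_ ?_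
  · refine le_sInf fun c hc => ?_
    obtain ⟨p, hp, rfl⟩ := hc
    exact le_trans (dist_le_walkWeight (G.addU S) hp) (addU_walkWeight_le G S p x)
  · refine le_sInf fun c hc => ?_
    obtain ⟨p, hp, rfl⟩ := hc
    have := dist_le_addU_walkWeight G S p x
    rwa [show p.getLastD x = y from hp] at this

private lemma addU_w_av_le (G : WGraph V) (a v : V) :
    (G.addU {(a, v)}).w a v ≤ G.dist a v := by
  refine le_trans inf_le_right (sInf_le ?_)
  exact ⟨Or.inl rfl, rfl⟩

private lemma key (G : WGraph V) (a b v : V) (r : List V) :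
    ∀ (m : List V) (x : V),
      (G.addU {(a, v)}).walkWeight x (m ++ a :: v :: r) ≤
        G.walkWeight x (m ++ a :: b :: v :: r) := by
  intro m
  induction m with
  | nil =>
      intro x
      show (G.addU {(a, v)}).w x a + ((G.addU {(a, v)}).w a v + (G.addU {(a, v)}).walkWeight v r)
          ≤ G.w x a + (G.w a b + (G.w b v + G.walkWeight v r))
      refine add_le_add (addU_w_le G _ x a) ?_
      have h1 : (G.addU {(a, v)}).w a v ≤ G.w a b + G.w b v := by
        refine le_trans (addU_w_av_le G a v) ?_
        have : G.dist a v ≤ G.walkWeight a [b, v] := dist_le_walkWeight G rfl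
        simpa [WGraph.walkWeight] using this
      calc (G.addU {(a, v)}).w a v + (G.addU {(a, v)}).walkWeight v r
          ≤ (G.w a b + G.w b v) + G.walkWeight v r :=
            add_le_add h1 (addU_walkWeight_le G _ r v)
        _ = G.w a b + (G.w b v + G.walkWeight v r) := by rw [add_assoc]
  | cons y m ih =>
      intro x
      exact add_le_add (addU_w_le G _ x y) (ih y)

end Aux


/-- replacing the shortcut `{u,v}` (where `u :: p = l ++ [a, b, v]` is a
minimum-weight, fewest-hops walk from `u` to `v` with more than 2 edges, so `a` is the
vertex `p_{i-2}`) by the shortcut `{a, v}` cannot destroy a `(k,k+1)`-ball: if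
`hopdist_G(z,t) = k+1` and the shortest-with-fewest-hops walk `z :: q` from `z` to `t`
contains the walk `u :: p` as a subpath, then `z` reaches `t` within `k` hops after
adding `{a, v}`. -/
theorem stmt7 {V : Type*} (G : WGraph V) (hsym : G.Symm) (hpos : G.Positive)
    (u v z t : V) (k : ℕ) (p q l : List V) (a b : V)
    (hp : WalkEnds u p v) (hpw : G.walkWeight u p = G.dist u v)
    (hph : ((p.length : ℕ∞)) = G.hopdist u v) (hlen : 2 < p.length)
    (hform : u :: p = l ++ [a, b, v])
    (hq : WalkEnds z q t) (hqw : G.walkWeight z q = G.dist z t)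
    (hqh : G.hopdist z t = ((k + 1 : ℕ) : ℕ∞)) (hql : q.length = k + 1)
    (hinfix : (u :: p) <:+: (z :: q)) :
    (G.addU {(a, v)}).hopdist z t ≤ (k : ℕ∞) := by
  classical
  -- l is nonempty
  obtain ⟨l', rfl⟩ : ∃ l', l = u :: l' := by
    cases l with
    | nil =>
        simp only [List.nil_append] at hform
        exact absurd hlen (by injection hform with _ h2; simp [h2])
    | cons x l' => exact ⟨l', by injection hform with h1 _; rw [h1]⟩
  obtain ⟨s, r, hsr⟩ := hinfix
  -- z :: q = (s ++ u :: l') ++ a :: b :: v :: r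
  have hzq : z :: q = (s ++ u :: l') ++ a :: b :: v :: r := by
    rw [← hsr, hform]; simp
  obtain ⟨m', hm'⟩ : ∃ m', s ++ u :: l' = z :: m' := by
    cases hs : s ++ u :: l' with
    | nil => exact absurd hs (by simp)
    | cons x m' =>
        rw [hs] at hzq
        injection hzq with h1 _
        exact ⟨m', by rw [h1]⟩
  rw [hm'] at hzq
  have hqeq : q = m' ++ a :: b :: v :: r := by injection hzq
  set q' : List V := m' ++ a :: v :: r with hq'def
  have hq'len : q'.length = k := by
    have : q.length = m'.length + 3 + r.length := by rw [hqeq]; simp; omega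
    simp only [hq'def, List.length_append, List.length_cons]
    omega
  have hends' : WalkEnds z q' t := by
    have h1 : q.getLastD z = t := hq
    rw [hqeq, getLastD_append'] at h1
    unfold WalkEnds
    rw [hq'def, getLastD_append']
    simpa [List.getLastD_cons] using h1
  have hwle : (G.addU {(a, v)}).walkWeight z q' ≤ G.walkWeight z q := by
    rw [hqeq, hq'def]
    exact key G a b v r m' z
  have hdzt : G.dist z t ≠ ⊤ := by
    intro h
    rw [WGraph.hopdist, if_pos h] at hqh
    exact ENat.coe_ne_top (k + 1) hqh.symm
  have hde : (G.addU {(a, v)}).dist z t = G.dist z t := addU_dist_eq G _ z t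
  have hwe : (G.addU {(a, v)}).walkWeight z q' = (G.addU {(a, v)}).dist z t := by
    refine le_antisymm ?_ (dist_le_walkWeight _ hends')
    rw [hde, ← hqw]
    exact hwle
  rw [WGraph.hopdist, if_neg (by rw [hde]; exact hdzt)]
  exact sInf_le ⟨q', hends', hwe, by rw [hq'len]⟩
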